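/- Let E be a Hilbert C*-module and let A, C be adjointable operators on E such that the closure of the range of A* is orthogonally complemented in E. If AA* = λ CC* for some real λ, then the range of A is contained in the range of C. -/

import Mathlib

/-! Write `x = m + n` with `m ∈ closure (range A*)` and `n ⊥ range A*`. Then `A n = 0`, because
`⟪A n, A n⟫ = ⟪n, A* A n⟫ = 0`. For `m`, the identity `AA* = λ CC*` gives
`‖A* z‖ = √|λ| ‖C* z‖`, so if `A* wₖ → m` and `λ ≠ 0` then `C* wₖ` is Cauchy, converging to
some `u`, and `A m = lim A A* wₖ = lim λ C C* wₖ = C (λ u)`; if `λ = 0` the same limit gives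
`A m = 0`. -/

open scoped ComplexOrder

def OrthoComplemented {A E : Type*} [NonUnitalCStarAlgebra A] [PartialOrder A]
    [StarOrderedRing A] [NormedAddCommGroup E] [NormedSpace ℂ E] [SMul A E]
    [CStarModule A E] (S : Set E) : Prop :=
  ∀ x : E, ∃ m ∈ S, ∃ n : E, (∀ y ∈ S, inner (𝕜 := A) y n = 0) ∧ x = m + n

open Filter Set Topology

theorem apply_mem_range_of_mem_closure_range {ι F G H : Type*} [PseudoMetricSpace F]
    [PseudoMetricSpace G] [CompleteSpace G] [TopologicalSpace H] [T2Space H]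
    {S : ι → F} {R : ι → G} {T : F → H} {C : G → H} (hT : Continuous T) (hC : Continuous C)
    {K : ℝ} (hK : 0 ≤ K) (hRS : ∀ a b, dist (R a) (R b) ≤ K * dist (S a) (S b))
    (hTS : ∀ i, T (S i) = C (R i)) {m : F} (hm : m ∈ closure (range S)) :
    T m ∈ range C := by
  obtain ⟨s, hs, hsm⟩ := mem_closure_iff_seq_limit.mp hm
  choose w hw using hs
  have hSw : Tendsto (S ∘ w) atTop (𝓝 m) := by simpa only [Function.comp_def, hw] using hsm
  have hRw : CauchySeq (R ∘ w) := by
    obtain ⟨b, hb0, hb, hblim⟩ := cauchySeq_iff_le_tendsto_0.mp hSw.cauchySeq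
    refine cauchySeq_iff_le_tendsto_0.mpr ⟨fun N => K * b N, fun N => mul_nonneg hK (hb0 N),
      fun i j N hi hj => (hRS _ _).trans (mul_le_mul_of_nonneg_left (hb i j N hi hj) hK), ?_⟩
    simpa using hblim.const_mul K
  obtain ⟨u, hu⟩ := cauchySeq_tendsto_of_complete hRw
  refine ⟨u, tendsto_nhds_unique ((hC.tendsto u).comp hu) ?_⟩
  simpa only [Function.comp_def, hTS] using (hT.tendsto m).comp hSw

section CStarModule

variable {A E : Type*} [NonUnitalCStarAlgebra A] [PartialOrder A]
  [NormedAddCommGroup E] [NormedSpace ℂ E] [SMul A E] [CStarModule A E]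

theorem apply_eq_zero_of_forall_inner_range_adjoint_eq_zero {T T' : E → E}
    (hT : ∀ x y, inner A (T x) y = inner A x (T' y)) {n : E}
    (hn : ∀ y ∈ range T', inner A y n = 0) : T n = 0 := by
  rw [← CStarModule.inner_self (A := A), hT, ← CStarModule.star_inner,
    hn _ (mem_range_self _), star_zero]

theorem norm_adjoint_apply_eq_of_comp_adjoint_eq_smul {T T' C C' : E → E}
    (hT : ∀ x y, inner A (T x) y = inner A x (T' y))
    (hC : ∀ x y, inner A (C x) y = inner A x (C' y)) {lam : ℝ}
    (h : ∀ z, T (T' z) = (lam : ℂ) • C (C' z)) (z : E) :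
    ‖T' z‖ = √|lam| * ‖C' z‖ := by
  have hinner : inner A (T' z) (T' z) = lam • inner A (C' z) (C' z) := by
    rw [← hT, h, Complex.coe_smul, CStarModule.inner_smul_left_real, hC]
  have hsq : ‖T' z‖ ^ 2 = |lam| * ‖C' z‖ ^ 2 := by
    rw [CStarModule.norm_sq_eq (A := A), CStarModule.norm_sq_eq (A := A), hinner, norm_smul,
      Real.norm_eq_abs]
  rw [← Real.sqrt_sq (norm_nonneg (T' z)), hsq, Real.sqrt_mul (abs_nonneg lam),
    Real.sqrt_sq (norm_nonneg _)]

end CStarModule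

/-- If `A, C` are adjointable operators on a Hilbert C*-module, the closure of the range of `A*`
is orthogonally complemented, and `AA* = λ CC*` for some real `λ`, then
`range A ⊆ range C`. -/
theorem stmt_10 {A E : Type*} [NonUnitalCStarAlgebra A] [PartialOrder A] [StarOrderedRing A]
    [NormedAddCommGroup E] [NormedSpace ℂ E] [SMul A E] [CStarModule A E] [CompleteSpace E]
    (T T' C C' : E →L[ℂ] E)
    (hT : ∀ (x y : E), inner (𝕜 := A) (T x) y = inner (𝕜 := A) x (T' y))
    (hC : ∀ (x y : E), inner (𝕜 := A) (C x) y = inner (𝕜 := A) x (C' y))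
    (hTc : OrthoComplemented (A := A) (closure (Set.range ⇑T')))
    (hlam : ∃ lam : ℝ, T ∘L T' = (lam : ℂ) • (C ∘L C')) :
    Set.range ⇑T ⊆ Set.range ⇑C := by
  obtain ⟨lam, hlam⟩ := hlam
  have hTT' (z : E) : T (T' z) = (lam : ℂ) • C (C' z) := by simpa using congr($hlam z)
  rintro _ ⟨x, rfl⟩
  obtain ⟨m, hm, n, hn, rfl⟩ := hTc x
  rw [map_add, apply_eq_zero_of_forall_inner_range_adjoint_eq_zero hT
    (fun y hy => hn y (subset_closure hy)), add_zero]
  by_cases hl : lam = 0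
  · exact apply_mem_range_of_mem_closure_range (R := fun _ => (0 : E)) T.continuous C.continuous
      le_rfl (by simp) (by simp [hTT', hl]) hm
  · have hdist (a b : E) : dist (C' a) (C' b) ≤ (√|lam|)⁻¹ * dist (T' a) (T' b) := by
      rw [dist_eq_norm, dist_eq_norm, ← map_sub, ← map_sub,
        norm_adjoint_apply_eq_of_comp_adjoint_eq_smul hT hC hTT',
        inv_mul_cancel_left₀ (by positivity)]
    obtain ⟨u, hu⟩ := apply_mem_range_of_mem_closure_range (C := (lam : ℂ) • C) T.continuous
      (by fun_prop) (by positivity) hdist (fun z => by simp [hTT']) hm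
    exact ⟨(lam : ℂ) • u, by simpa using hu⟩
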